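/- For every graph H on k vertices (k ≥ 1), there exists a real number L with 0 ≤ L ≤ 1 such that the sequence n ↦ P(H, n)/C(n, k) converges to L as n → ∞. -/

import Mathlib

open Classical in
/-- Number of `k`-element vertex subsets of `G` whose induced subgraph is isomorphic to `H`,
where `k` is the number of vertices of `H`. -/
noncomputable def inducedCount {α β : Type*} [Fintype α] [Fintype β]
    (H : SimpleGraph α) (G : SimpleGraph β) : ℕ :=
  (Finset.univ.filter fun S : Finset β =>
    S.card = Fintype.card α ∧ Nonempty ((G.induce (S : Set β)) ≃g H)).card

/-- The maximum of `inducedCount H G` over all graphs `G` on `n` vertices. -/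
noncomputable def maxInducedCount {α : Type*} [Fintype α] (H : SimpleGraph α) (n : ℕ) : ℕ :=
  sSup {m | ∃ G : SimpleGraph (Fin n), inducedCount H G = m}

/-!
Let `k = |H|`. In a graph `G` on `n + 1` vertices, each induced copy of `H` avoids exactly
`n + 1 - k` vertices, so it survives in `n + 1 - k` of the `n + 1` vertex-deleted subgraphs, each
of which has at most `P(H, n)` induced copies. Applied to an extremal `G` this gives
`(n + 1 - k) P(H, n + 1) ≤ (n + 1) P(H, n)`, and since `C(n + 1, k) (n + 1 - k) = C(n, k) (n + 1)`,
the densities `P(H, n) / C(n, k)` are non-increasing from `n = k` on. Being in `[0, 1]`, they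
converge.
-/

open Finset

namespace SimpleGraph

variable {V W : Type*} {G : SimpleGraph V} {G' : SimpleGraph W}

noncomputable def Embedding.induceMapIso (f : G ↪g G') (s : Finset V) :
    G.induce (s : Set V) ≃g G'.induce (s.map f.toEmbedding : Set W) :=
  { (Equiv.Set.image f s f.injective).trans (Equiv.setCongr (coe_map _ _).symm) with
    map_rel_iff' := f.map_adj_iff }

end SimpleGraph

section InducedCopies

open Classical in
noncomputable def inducedCopies {α β : Type*} [Fintype α] [Fintype β]
    (H : SimpleGraph α) (G : SimpleGraph β) : Finset (Finset β) :=
  univ.filter fun S : Finset β => S.card = Fintype.card α ∧ Nonempty ((G.induce (S : Set β)) ≃g H)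

variable {α β γ : Type*} [Fintype α] [Fintype β] [Fintype γ] (H : SimpleGraph α)

theorem card_inducedCopies (G : SimpleGraph β) : #(inducedCopies H G) = inducedCount H G := rfl

theorem mem_inducedCopies {G : SimpleGraph β} {S : Finset β} :
    S ∈ inducedCopies H G ↔ #S = Fintype.card α ∧ Nonempty ((G.induce (S : Set β)) ≃g H) := by
  simp [inducedCopies]

open Classical in
theorem card_filter_subset_range_le_inducedCount {G : SimpleGraph β} {G' : SimpleGraph γ}
    (f : G' ↪g G) : #{S ∈ inducedCopies H G | ↑S ⊆ Set.range f} ≤ inducedCount H G' := by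
  refine card_le_card_of_surjOn (·.map f.toEmbedding) fun S hS => ?_
  obtain ⟨hS, hSf⟩ := mem_filter.1 (mem_coe.1 hS)
  obtain ⟨hcard, ⟨e⟩⟩ := (mem_inducedCopies H).1 hS
  have hmap : (S.preimage f f.injective.injOn).map f.toEmbedding = S := by
    rw [← coe_inj, coe_map, coe_preimage]
    exact Set.image_preimage_eq_of_subset hSf
  refine ⟨S.preimage f f.injective.injOn, (mem_inducedCopies H).2 ⟨?_, ?_⟩, hmap⟩
  · rw [← hcard, ← card_map f.toEmbedding, hmap]
  · rw [← hmap] at e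
    exact ⟨(f.induceMapIso _).trans e⟩

theorem inducedCount_le_of_iso {G : SimpleGraph β} {G' : SimpleGraph γ} (e : G ≃g G') :
    inducedCount H G ≤ inducedCount H G' := by
  simpa [card_inducedCopies] using card_filter_subset_range_le_inducedCount H e.symm.toEmbedding

theorem inducedCount_le_choose (G : SimpleGraph β) :
    inducedCount H G ≤ (Fintype.card β).choose (Fintype.card α) := by
  rw [← card_inducedCopies, ← card_univ, ← card_powersetCard]
  exact card_le_card fun S hS => mem_powersetCard_univ.2 ((mem_inducedCopies H).1 hS).1

theorem bddAbove_range_inducedCount (n : ℕ) :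
    BddAbove (Set.range fun G : SimpleGraph (Fin n) => inducedCount H G) := by
  refine ⟨n.choose (Fintype.card α), ?_⟩
  rintro _ ⟨G, rfl⟩
  simpa using inducedCount_le_choose H G

theorem range_inducedCount_nonempty (n : ℕ) :
    (Set.range fun G : SimpleGraph (Fin n) => inducedCount H G).Nonempty :=
  Set.range_nonempty _

theorem exists_inducedCount_eq_maxInducedCount (n : ℕ) :
    ∃ G : SimpleGraph (Fin n), inducedCount H G = maxInducedCount H n :=
  Nat.sSup_mem (range_inducedCount_nonempty H n) (bddAbove_range_inducedCount H n)

theorem maxInducedCount_le_choose (n : ℕ) :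
    maxInducedCount H n ≤ n.choose (Fintype.card α) := by
  refine csSup_le (range_inducedCount_nonempty H n) ?_
  rintro _ ⟨G, rfl⟩
  simpa using inducedCount_le_choose H G

theorem inducedCount_le_maxInducedCount {n : ℕ} (G : SimpleGraph β) (h : Fintype.card β = n) :
    inducedCount H G ≤ maxInducedCount H n :=
  (inducedCount_le_of_iso H (SimpleGraph.Iso.map (Fintype.equivFinOfCardEq h) G)).trans
    (le_csSup (bddAbove_range_inducedCount H n) ⟨_, rfl⟩)

end InducedCopies

theorem Finset.sum_card_filter_notMem {β : Type*} [Fintype β] [DecidableEq β]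
    {𝒜 : Finset (Finset β)} {k : ℕ} (h𝒜 : ∀ S ∈ 𝒜, #S = k) :
    ∑ v, #{S ∈ 𝒜 | v ∉ S} = (Fintype.card β - k) * #𝒜 := by
  calc ∑ v, #{S ∈ 𝒜 | v ∉ S} = ∑ S ∈ 𝒜, #Sᶜ := by
        simp only [card_filter]
        rw [sum_comm]
        simp [compl_eq_univ_sdiff, ← filter_notMem_eq_sdiff, card_filter]
    _ = ∑ S ∈ 𝒜, (Fintype.card β - k) := sum_congr rfl fun S hS => by rw [card_compl, h𝒜 S hS]
    _ = (Fintype.card β - k) * #𝒜 := by rw [sum_const, smul_eq_mul, mul_comm]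

section Monotonicity

variable {α β : Type*} [Fintype α] [Fintype β] (H : SimpleGraph α)

open Classical in
theorem card_filter_notMem_inducedCopies_le {n : ℕ} (G : SimpleGraph β)
    (h : Fintype.card β = n + 1) (v : β) :
    #{S ∈ inducedCopies H G | v ∉ S} ≤ maxInducedCount H n := by
  have hcard : Fintype.card ({v}ᶜ : Set β) = n := by simp [filter_ne', h]
  have hrange : Set.range (SimpleGraph.Embedding.induce (G := G) {v}ᶜ) = {v}ᶜ := Subtype.range_coe
  calc #{S ∈ inducedCopies H G | v ∉ S}
      = #{S ∈ inducedCopies H G | ↑S ⊆ Set.range (SimpleGraph.Embedding.induce {v}ᶜ)} := by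
        simp only [hrange, Set.subset_compl_singleton_iff, mem_coe]
    _ ≤ inducedCount H (G.induce {v}ᶜ) := card_filter_subset_range_le_inducedCount H _
    _ ≤ maxInducedCount H n := inducedCount_le_maxInducedCount H _ hcard

theorem sub_mul_inducedCount_le {n : ℕ} (G : SimpleGraph β) (h : Fintype.card β = n + 1) :
    (n + 1 - Fintype.card α) * inducedCount H G ≤ (n + 1) * maxInducedCount H n := by
  classical
  calc (n + 1 - Fintype.card α) * inducedCount H G
      = ∑ v, #{S ∈ inducedCopies H G | v ∉ S} := by
        rw [sum_card_filter_notMem fun S hS => ((mem_inducedCopies H).1 hS).1, h,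
          card_inducedCopies]
    _ ≤ ∑ _v : β, maxInducedCount H n :=
        sum_le_sum fun v _ => card_filter_notMem_inducedCopies_le H G h v
    _ = (n + 1) * maxInducedCount H n := by rw [sum_const, card_univ, h, smul_eq_mul]

theorem sub_mul_maxInducedCount_succ_le (n : ℕ) :
    (n + 1 - Fintype.card α) * maxInducedCount H (n + 1) ≤ (n + 1) * maxInducedCount H n := by
  obtain ⟨G, hG⟩ := exists_inducedCount_eq_maxInducedCount H (n + 1)
  exact hG ▸ sub_mul_inducedCount_le H G (Fintype.card_fin _)

theorem maxInducedCount_div_choose_succ_le {n : ℕ} (hn : Fintype.card α ≤ n) :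
    (maxInducedCount H (n + 1) : ℝ) / (n + 1).choose (Fintype.card α) ≤
      (maxInducedCount H n : ℝ) / n.choose (Fintype.card α) := by
  set k := Fintype.card α
  have hchoose : (n.choose k : ℝ) * (n + 1) = (n + 1).choose k * ((n + 1 - k : ℕ) : ℝ) := by
    exact_mod_cast Nat.choose_mul_succ_eq n k
  have hstep :
      ((n + 1 - k : ℕ) : ℝ) * maxInducedCount H (n + 1) ≤ (n + 1) * maxInducedCount H n := by
    exact_mod_cast sub_mul_maxInducedCount_succ_le H n
  have hsub : (0 : ℝ) < (n + 1 - k : ℕ) := by exact_mod_cast Nat.sub_pos_of_lt (by omega)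
  rw [div_le_div_iff₀ (by exact_mod_cast Nat.choose_pos (by omega))
    (by exact_mod_cast Nat.choose_pos hn)]
  nlinarith [mul_le_mul_of_nonneg_right hstep (Nat.cast_nonneg (n.choose k))]

end Monotonicity

theorem inducibility_exists_general {α : Type*} [Fintype α] (H : SimpleGraph α) :
    ∃ L : ℝ, 0 ≤ L ∧ L ≤ 1 ∧
      Filter.Tendsto (fun n : ℕ => (maxInducedCount H n : ℝ) / (n.choose (Fintype.card α) : ℝ))
        Filter.atTop (nhds L) := by
  set k := Fintype.card α
  set f := fun n : ℕ => (maxInducedCount H n : ℝ) / (n.choose k : ℝ)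
  have hf_nonneg : ∀ n, 0 ≤ f n := fun n => by positivity
  have hf_le_one : ∀ n, f n ≤ 1 := fun n =>
    div_le_one_of_le₀ (by exact_mod_cast maxInducedCount_le_choose H n) (by positivity)
  have hf_anti : Antitone fun m => f (m + k) := antitone_nat_of_succ_le fun m => by
    simpa [f, add_right_comm] using maxInducedCount_div_choose_succ_le H (Nat.le_add_left k m)
  obtain ⟨L, hL⟩ : ∃ L, Filter.Tendsto f Filter.atTop (nhds L) :=
    ⟨_, (Filter.tendsto_add_atTop_iff_nat k).1
      (tendsto_atTop_ciInf hf_anti ⟨0, by rintro _ ⟨m, rfl⟩; exact hf_nonneg _⟩)⟩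
  exact ⟨L, ge_of_tendsto' hL hf_nonneg, le_of_tendsto' hL hf_le_one, hL⟩

/-- For every graph `H` on `k ≥ 1` vertices, the sequence
`n ↦ P(H,n)/C(n,k)` converges to some limit `L ∈ [0,1]` (the inducibility of `H`). -/
theorem inducibility_exists {α : Type*} [Fintype α] (H : SimpleGraph α)
    (hk : 1 ≤ Fintype.card α) :
    ∃ L : ℝ, 0 ≤ L ∧ L ≤ 1 ∧
      Filter.Tendsto (fun n : ℕ => (maxInducedCount H n : ℝ) / (n.choose (Fintype.card α) : ℝ))
        Filter.atTop (nhds L) :=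
  inducibility_exists_general H
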